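/- Let H be a complex Hilbert space and L ⊆ H a closed Lagrangian real-linear subspace. Let D₁, D₂ : H → ℝ be continuous real-linear functionals and η₁, η₂ ∈ J L points with D_k(ξ) = 2·ω(ξ,η_k) for all ξ ∈ L (k = 1, 2). Fix τ ∈ H and write τ = a + J b with a, b ∈ L, and set D̂_k(τ̂) := D_k(a) − i·D_k(b). Then the function G : ℝ² → ℂ defined by G(λ₁,λ₂) := ρ^{λ₁·D₁ + λ₂·D₂, λ₁·η₁ + λ₂·η₂}(τ) has a mixed second partial derivative at (0,0) satisfying − ∂²G/∂λ₁∂λ₂ (0,0) = ρ(τ) · ( D̂₁(τ̂)·D̂₂(τ̂) − (i/2)·D₁(η₂) − (i/2)·D₂(η₁) + g(η₁,η₂) ). (This is the coherent-state matrix element of the Feynman quantization of the quadratic observable D₁·D₂.) -/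

import Mathlib

/-!
The Lagrangian condition makes `Im⟪·,·⟫` vanish on `L`, so every vector splits uniquely as
`u + J v` with `u, v ∈ L`. Writing `η_k = J x_k` with `x_k ∈ L`, the decomposition of `τ` along
`λ₁η₁ + λ₂η₂ + L` is therefore explicit, `τ^R = a + J (λ₁x₁ + λ₂x₂)`, `τ^I = b - (λ₁x₁ + λ₂x₂)`,
and `D_k = Re⟪·, x_k⟫` on `L`. Substituting, `G` is the exponential of a quadratic polynomial
in `(λ₁, λ₂)` whose constant term is `log ρ(τ)`, and the mixed derivative at the origin of
`exp (k₀ + k₁λ₁ + k₂λ₂ + k₁₁λ₁² + k₁₂λ₁λ₂ + k₂₂λ₂²)` is `e^{k₀} (k₁k₂ + k₁₂)`.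
-/

open Complex
open scoped InnerProductSpace

theorem hasDerivAt_cexp_quadratic (A B C : ℂ) (t : ℝ) :
    HasDerivAt (fun l : ℝ => exp (A + B * l + C * l ^ 2))
      (exp (A + B * t + C * t ^ 2) * (B + 2 * C * t)) t := by
  have hpoly : HasDerivAt (fun z : ℂ => A + B * z + C * z ^ 2) (B + 2 * C * t) t :=
    ((((hasDerivAt_id (t : ℂ)).const_mul B).const_add A).add
      ((hasDerivAt_pow 2 (t : ℂ)).const_mul C)).congr_deriv (by simp; ring)
  exact hpoly.cexp.comp_ofReal

section QuadraticExponent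

variable {F : ℝ → ℝ → ℂ} {k₀ k₁ k₂ k₁₁ k₁₂ k₂₂ : ℂ}

theorem hasDerivAt_right_of_eq_cexp_quadratic
    (hF : ∀ l₁ l₂ : ℝ, F l₁ l₂ =
      exp (k₀ + k₁ * l₁ + k₂ * l₂ + k₁₁ * l₁ ^ 2 + k₁₂ * (l₁ * l₂) + k₂₂ * l₂ ^ 2))
    (l₁ : ℝ) :
    HasDerivAt (F l₁) (exp (k₀ + k₁ * l₁ + k₁₁ * l₁ ^ 2) * (k₂ + k₁₂ * l₁)) 0 := by
  have hF₁ : F l₁ = fun l₂ : ℝ =>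
      exp ((k₀ + k₁ * l₁ + k₁₁ * l₁ ^ 2) + (k₂ + k₁₂ * l₁) * l₂ + k₂₂ * l₂ ^ 2) := by
    funext l₂
    rw [hF]
    ring_nf
  rw [hF₁]
  simpa using hasDerivAt_cexp_quadratic (k₀ + k₁ * l₁ + k₁₁ * l₁ ^ 2) (k₂ + k₁₂ * l₁) k₂₂ 0

theorem differentiableAt_and_hasDerivAt_deriv_of_eq_cexp_quadratic
    (hF : ∀ l₁ l₂ : ℝ, F l₁ l₂ =
      exp (k₀ + k₁ * l₁ + k₂ * l₂ + k₁₁ * l₁ ^ 2 + k₁₂ * (l₁ * l₂) + k₂₂ * l₂ ^ 2)) :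
    (∀ l₁, DifferentiableAt ℝ (F l₁) 0) ∧
      HasDerivAt (fun l₁ => deriv (F l₁) 0) (exp k₀ * (k₁ * k₂ + k₁₂)) 0 := by
  refine ⟨fun l₁ ↦ (hasDerivAt_right_of_eq_cexp_quadratic hF l₁).differentiableAt, ?_⟩
  have hderiv : (fun l₁ => deriv (F l₁) 0) =
      fun l₁ : ℝ => exp (k₀ + k₁ * l₁ + k₁₁ * l₁ ^ 2) * (k₂ + k₁₂ * l₁) :=
    funext fun l₁ => (hasDerivAt_right_of_eq_cexp_quadratic hF l₁).deriv
  have hlin : HasDerivAt (fun l : ℝ => k₂ + k₁₂ * l) k₁₂ 0 := by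
    simpa using ((hasDerivAt_id (0 : ℝ)).ofReal_comp.const_mul k₁₂).const_add k₂
  rw [hderiv]
  exact ((hasDerivAt_cexp_quadratic k₀ k₁ k₁₁ 0).mul hlin).congr_deriv (by simp; ring)

end QuadraticExponent

section Lagrangian

variable {H : Type*} [NormedAddCommGroup H] [InnerProductSpace ℂ H] {L : Submodule ℝ H}

theorem re_inner_I_smul_left (u w : H) : (⟪I • u, w⟫_ℂ).re = (⟪u, w⟫_ℂ).im := by
  simp

theorem im_inner_I_smul_right (u w : H) : (⟪u, I • w⟫_ℂ).im = (⟪u, w⟫_ℂ).re := by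
  simp

theorem re_inner_I_smul_I_smul (u w : H) : (⟪I • u, I • w⟫_ℂ).re = (⟪u, w⟫_ℂ).re := by
  simp

/-- The exponent of `ρ^{D,η₀}(τ)` at the decomposition `τ = r + J s`, `r ∈ η₀ + L`, `s ∈ L`. -/
noncomputable def weylExponent (D : H →L[ℝ] ℝ) (r s : H) : ℂ :=
  (I / 2) * (D r : ℂ) - (I / 2) * ((⟪r, s⟫_ℂ).re : ℂ) - (1 / 2) * ((⟪s, s⟫_ℂ).re : ℂ)

theorem im_inner_eq_zero_of_isLagrangian
    (hLag : (L : Set H) = {x : H | ∀ ξ ∈ L, (1/2 : ℝ) * (⟪x, ξ⟫_ℂ).im = 0})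
    {u w : H} (hu : u ∈ L) (hw : w ∈ L) : (⟪u, w⟫_ℂ).im = 0 := by
  have hu' : u ∈ {x : H | ∀ ξ ∈ L, (1/2 : ℝ) * (⟪x, ξ⟫_ℂ).im = 0} := hLag ▸ hu
  simpa using hu' w hw

variable (hL : ∀ u ∈ L, ∀ w ∈ L, (⟪u, w⟫_ℂ).im = 0)
include hL

theorem eq_zero_of_add_I_smul_eq_zero {u v : H} (hu : u ∈ L) (hv : v ∈ L)
    (h : u + I • v = 0) : u = 0 ∧ v = 0 := by
  have hu_eq : u = -(I • v) := eq_neg_of_add_eq_zero_left h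
  have him := hL u hu v hv
  rw [hu_eq] at him -- `Im⟪-(I • v), v⟫ = ‖v‖ ^ 2`
  have hv0 : v = 0 := by simpa [inner_smul_left, ← ofReal_pow] using him
  exact ⟨by simp [hu_eq, hv0], hv0⟩

theorem eq_of_add_I_smul_eq_add_I_smul {u v u' v' : H} (hu : u ∈ L) (hv : v ∈ L)
    (hu' : u' ∈ L) (hv' : v' ∈ L) (h : u + I • v = u' + I • v') : u = u' ∧ v = v' := by
  have h₀ : (u - u') + I • (v - v') = 0 := by linear_combination (norm := module) h
  obtain ⟨hu₀, hv₀⟩ := eq_zero_of_add_I_smul_eq_zero hL (sub_mem hu hu') (sub_mem hv hv') h₀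
  exact ⟨sub_eq_zero.mp hu₀, sub_eq_zero.mp hv₀⟩

theorem eq_add_I_smul_and_eq_sub_of_sub_I_smul_mem {x a b r s : H} (hx : x ∈ L) (ha : a ∈ L)
    (hb : b ∈ L) (hs : s ∈ L) (hr : r - I • x ∈ L) (h : a + I • b = r + I • s) :
    r = a + I • x ∧ s = b - x := by
  have h' : a + I • b = (r - I • x) + I • (x + s) := by rw [h]; module
  obtain ⟨hra, hbs⟩ := eq_of_add_I_smul_eq_add_I_smul hL ha hb hr (add_mem hx hs) h'
  exact ⟨by rw [hra]; abel, by rw [hbs]; abel⟩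

theorem weylExponent_eq {D : H →L[ℝ] ℝ} {x a b : H} (hx : x ∈ L) (ha : a ∈ L) (hb : b ∈ L)
    (hD : ∀ ξ ∈ L, D ξ = (⟪ξ, x⟫_ℂ).re) :
    weylExponent D (a + I • x) (b - x)
      = (-(I / 2) * ((⟪a, b⟫_ℂ).re : ℂ) - (1 / 2) * ((⟪b, b⟫_ℂ).re : ℂ))
        + I * ((D a : ℂ) - I * D b) + (I / 2) * (D (I • x) : ℂ)
        - (1 / 2) * ((⟪x, x⟫_ℂ).re : ℂ) := by
  have hre : (⟪a + I • x, b - x⟫_ℂ).re = (⟪a, b⟫_ℂ).re - D a := by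
    rw [inner_add_left, inner_sub_right, inner_sub_right, Complex.add_re, Complex.sub_re,
      Complex.sub_re, re_inner_I_smul_left, re_inner_I_smul_left, hL x hx b hb, hL x hx x hx,
      hD a ha]
    ring
  have hss : (⟪b - x, b - x⟫_ℂ).re = (⟪b, b⟫_ℂ).re - 2 * D b + (⟪x, x⟫_ℂ).re := by
    rw [hD b hb]
    simp only [inner_sub_left, inner_sub_right, Complex.sub_re]
    rw [← inner_conj_symm b x, Complex.conj_re]
    ring
  rw [weylExponent, hre, hss, map_add]
  push_cast
  ring_nf
  rw [I_sq]
  ring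

theorem weylExponent_eq_quadratic {D₁ D₂ : H →L[ℝ] ℝ} {x₁ x₂ a b : H} (hx₁ : x₁ ∈ L)
    (hx₂ : x₂ ∈ L) (ha : a ∈ L) (hb : b ∈ L) (hD₁ : ∀ ξ ∈ L, D₁ ξ = (⟪ξ, x₁⟫_ℂ).re)
    (hD₂ : ∀ ξ ∈ L, D₂ ξ = (⟪ξ, x₂⟫_ℂ).re) (l₁ l₂ : ℝ) :
    weylExponent (l₁ • D₁ + l₂ • D₂) (a + I • (l₁ • x₁ + l₂ • x₂)) (b - (l₁ • x₁ + l₂ • x₂))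
      = (-(I / 2) * ((⟪a, b⟫_ℂ).re : ℂ) - (1 / 2) * ((⟪b, b⟫_ℂ).re : ℂ))
        + I * ((D₁ a : ℂ) - I * D₁ b) * l₁ + I * ((D₂ a : ℂ) - I * D₂ b) * l₂
        + ((I / 2) * (D₁ (I • x₁) : ℂ) - (1 / 2) * ((⟪I • x₁, I • x₁⟫_ℂ).re : ℂ)) * l₁ ^ 2
        + ((I / 2) * ((D₁ (I • x₂) : ℂ) + D₂ (I • x₁)) - ((⟪I • x₁, I • x₂⟫_ℂ).re : ℂ))
          * (l₁ * l₂)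
        + ((I / 2) * (D₂ (I • x₂) : ℂ) - (1 / 2) * ((⟪I • x₂, I • x₂⟫_ℂ).re : ℂ)) * l₂ ^ 2 := by
  have hD : ∀ ξ ∈ L, (l₁ • D₁ + l₂ • D₂) ξ = (⟪ξ, l₁ • x₁ + l₂ • x₂⟫_ℂ).re := by
    intro ξ hξ
    simp only [add_apply, smul_apply, smul_eq_mul, hD₁ ξ hξ, hD₂ ξ hξ, inner_add_right,
      ← Complex.coe_smul, inner_smul_right, Complex.add_re, Complex.re_ofReal_mul]
  have hIx : I • (l₁ • x₁ + l₂ • x₂) = l₁ • (I • x₁) + l₂ • (I • x₂) := by module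
  rw [weylExponent_eq hL (add_mem (L.smul_mem l₁ hx₁) (L.smul_mem l₂ hx₂)) ha hb hD,
    re_inner_I_smul_I_smul, re_inner_I_smul_I_smul, re_inner_I_smul_I_smul, hIx]
  simp only [add_apply, smul_apply, map_add, map_smul, smul_eq_mul]
  simp only [inner_add_left, inner_add_right, ← Complex.coe_smul, inner_smul_left,
    inner_smul_right, Complex.conj_ofReal, Complex.add_re, Complex.re_ofReal_mul]
  rw [← inner_conj_symm x₁ x₂, Complex.conj_re]
  push_cast
  ring

end Lagrangian

theorem stmt_8_general
    {H : Type*} [NormedAddCommGroup H] [InnerProductSpace ℂ H]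
    (L : Submodule ℝ H)
    (hLag : (L : Set H) = {x : H | ∀ ξ ∈ L, (1/2 : ℝ) * (inner ℂ x ξ : ℂ).im = 0})
    (D₁ D₂ : H →L[ℝ] ℝ) (η₁ η₂ : H)
    (hη₁ : ∃ x ∈ L, η₁ = Complex.I • x) (hη₂ : ∃ x ∈ L, η₂ = Complex.I • x)
    (hD₁ : ∀ ξ ∈ L, D₁ ξ = 2 * ((1/2 : ℝ) * (inner ℂ ξ η₁ : ℂ).im))
    (hD₂ : ∀ ξ ∈ L, D₂ ξ = 2 * ((1/2 : ℝ) * (inner ℂ ξ η₂ : ℂ).im))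
    (τ a b : H) (ha : a ∈ L) (hb : b ∈ L) (hab : τ = a + Complex.I • b)
    (r s : ℝ → ℝ → H)
    (hr : ∀ l1 l2 : ℝ, ∃ l ∈ L, r l1 l2 = (l1 • η₁ + l2 • η₂) + l)
    (hs : ∀ l1 l2 : ℝ, s l1 l2 ∈ L)
    (hτdec : ∀ l1 l2 : ℝ, τ = r l1 l2 + Complex.I • s l1 l2)
    (G : ℝ → ℝ → ℂ)
    (hG : ∀ l1 l2 : ℝ, G l1 l2 =
      Complex.exp ((Complex.I / 2) * ((l1 * D₁ (r l1 l2) + l2 * D₂ (r l1 l2) : ℝ) : ℂ)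
        - (Complex.I / 2) * ((inner ℂ (r l1 l2) (s l1 l2) : ℂ).re : ℂ)
        - (1/2 : ℂ) * ((inner ℂ (s l1 l2) (s l1 l2) : ℂ).re : ℂ))) :
    ∃ c : ℂ,
      (∀ l1 : ℝ, DifferentiableAt ℝ (fun l2 => G l1 l2) 0) ∧
      HasDerivAt (fun l1 => deriv (fun l2 => G l1 l2) 0) c 0 ∧
      -c = Complex.exp (-(Complex.I / 2) * ((inner ℂ a b : ℂ).re : ℂ)
            - (1/2 : ℂ) * ((inner ℂ b b : ℂ).re : ℂ)) *
          (((D₁ a : ℂ) - Complex.I * (D₁ b : ℂ)) * ((D₂ a : ℂ) - Complex.I * (D₂ b : ℂ))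
            - (Complex.I / 2) * (D₁ η₂ : ℂ)
            - (Complex.I / 2) * (D₂ η₁ : ℂ)
            + ((inner ℂ η₁ η₂ : ℂ).re : ℂ)) := by
  obtain ⟨x₁, hx₁, rfl⟩ := hη₁
  obtain ⟨x₂, hx₂, rfl⟩ := hη₂
  have hL : ∀ u ∈ L, ∀ w ∈ L, (⟪u, w⟫_ℂ).im = 0 := fun u hu w hw ↦
    im_inner_eq_zero_of_isLagrangian hLag hu hw
  have hD₁' : ∀ ξ ∈ L, D₁ ξ = (⟪ξ, x₁⟫_ℂ).re := fun ξ hξ ↦ by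
    rw [hD₁ ξ hξ, im_inner_I_smul_right]; ring
  have hD₂' : ∀ ξ ∈ L, D₂ ξ = (⟪ξ, x₂⟫_ℂ).re := fun ξ hξ ↦ by
    rw [hD₂ ξ hξ, im_inner_I_smul_right]; ring
  have hrs : ∀ l₁ l₂ : ℝ, r l₁ l₂ = a + I • (l₁ • x₁ + l₂ • x₂) ∧
      s l₁ l₂ = b - (l₁ • x₁ + l₂ • x₂) := fun l₁ l₂ ↦ by
    obtain ⟨l, hl, hrl⟩ := hr l₁ l₂
    refine eq_add_I_smul_and_eq_sub_of_sub_I_smul_mem hL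
      (add_mem (L.smul_mem l₁ hx₁) (L.smul_mem l₂ hx₂)) ha hb (hs l₁ l₂) ?_ (hab ▸ hτdec l₁ l₂)
    convert hl using 1
    rw [hrl]
    module
  obtain ⟨hdiff, hderiv⟩ := differentiableAt_and_hasDerivAt_deriv_of_eq_cexp_quadratic
    (F := G) fun l₁ l₂ ↦ by
      have hGl : G l₁ l₂ = exp (weylExponent (l₁ • D₁ + l₂ • D₂) (r l₁ l₂) (s l₁ l₂)) :=
        hG l₁ l₂
      rw [hGl, (hrs l₁ l₂).1, (hrs l₁ l₂).2,
        weylExponent_eq_quadratic hL hx₁ hx₂ ha hb hD₁' hD₂' l₁ l₂]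
  refine ⟨_, hdiff, hderiv, ?_⟩
  -- the product of the two linear coefficients is `I ^ 2 * D̂₁(τ̂) * D̂₂(τ̂)`
  linear_combination -(exp (-(I / 2) * ((⟪a, b⟫_ℂ).re : ℂ) - (1 / 2) * ((⟪b, b⟫_ℂ).re : ℂ))
    * ((D₁ a : ℂ) - I * D₁ b) * ((D₂ a : ℂ) - I * D₂ b)) * I_sq

/-- quantization of a quadratic observable `D₁·D₂`.
Let `H` be a complex Hilbert space, `L ⊆ H` a closed Lagrangian real-linear subspace.
Let `D₁, D₂ : H → ℝ` be continuous real-linear functionals and `η₁, η₂ ∈ J L` with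
`D_k(ξ) = 2·ω(ξ,η_k)` for all `ξ ∈ L`.  Fix `τ = a + J b` with `a, b ∈ L`.  For every
`(λ₁,λ₂)` let `τ = r λ₁ λ₂ + J (s λ₁ λ₂)` be the decomposition with
`r λ₁ λ₂ ∈ (λ₁·η₁ + λ₂·η₂) + L`, `s λ₁ λ₂ ∈ L`, and let
`G(λ₁,λ₂) := ρ^{λ₁·D₁+λ₂·D₂, λ₁·η₁+λ₂·η₂}(τ)`.  Then `G` has a mixed second partial
derivative at `(0,0)` with
`−∂²G/∂λ₁∂λ₂(0,0) = ρ(τ)·(D̂₁(τ̂)·D̂₂(τ̂) − (i/2)·D₁(η₂) − (i/2)·D₂(η₁) + g(η₁,η₂))`,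
where `D̂_k(τ̂) = D_k(a) − i·D_k(b)`. -/
theorem stmt_8
    {H : Type*} [NormedAddCommGroup H] [InnerProductSpace ℂ H] [CompleteSpace H]
    (L : Submodule ℝ H) (hClosed : IsClosed (L : Set H))
    (hLag : (L : Set H) = {x : H | ∀ ξ ∈ L, (1/2 : ℝ) * (inner ℂ x ξ : ℂ).im = 0})
    (D₁ D₂ : H →L[ℝ] ℝ) (η₁ η₂ : H)
    (hη₁ : ∃ x ∈ L, η₁ = Complex.I • x) (hη₂ : ∃ x ∈ L, η₂ = Complex.I • x)
    (hD₁ : ∀ ξ ∈ L, D₁ ξ = 2 * ((1/2 : ℝ) * (inner ℂ ξ η₁ : ℂ).im))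
    (hD₂ : ∀ ξ ∈ L, D₂ ξ = 2 * ((1/2 : ℝ) * (inner ℂ ξ η₂ : ℂ).im))
    (τ a b : H) (ha : a ∈ L) (hb : b ∈ L) (hab : τ = a + Complex.I • b)
    (r s : ℝ → ℝ → H)
    (hr : ∀ l1 l2 : ℝ, ∃ l ∈ L, r l1 l2 = (l1 • η₁ + l2 • η₂) + l)
    (hs : ∀ l1 l2 : ℝ, s l1 l2 ∈ L)
    (hτdec : ∀ l1 l2 : ℝ, τ = r l1 l2 + Complex.I • s l1 l2)
    (G : ℝ → ℝ → ℂ)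
    (hG : ∀ l1 l2 : ℝ, G l1 l2 =
      Complex.exp ((Complex.I / 2) * ((l1 * D₁ (r l1 l2) + l2 * D₂ (r l1 l2) : ℝ) : ℂ)
        - (Complex.I / 2) * ((inner ℂ (r l1 l2) (s l1 l2) : ℂ).re : ℂ)
        - (1/2 : ℂ) * ((inner ℂ (s l1 l2) (s l1 l2) : ℂ).re : ℂ))) :
    ∃ c : ℂ,
      (∀ l1 : ℝ, DifferentiableAt ℝ (fun l2 => G l1 l2) 0) ∧
      HasDerivAt (fun l1 => deriv (fun l2 => G l1 l2) 0) c 0 ∧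
      -c = Complex.exp (-(Complex.I / 2) * ((inner ℂ a b : ℂ).re : ℂ)
            - (1/2 : ℂ) * ((inner ℂ b b : ℂ).re : ℂ)) *
          (((D₁ a : ℂ) - Complex.I * (D₁ b : ℂ)) * ((D₂ a : ℂ) - Complex.I * (D₂ b : ℂ))
            - (Complex.I / 2) * (D₁ η₂ : ℂ)
            - (Complex.I / 2) * (D₂ η₁ : ℂ)
            + ((inner ℂ η₁ η₂ : ℂ).re : ℂ)) :=
  stmt_8_general L hLag D₁ D₂ η₁ η₂ hη₁ hη₂ hD₁ hD₂ τ a b ha hb hab r s hr hs hτdec G hG
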